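/- Let 1 < p < ∞, let ω be a weight on the upper half-plane 𝓗 belonging to the Békollé–Bonami class B_p, and let μ be a positive Borel measure on 𝓗. Then there is a constant C > 0, depending only on p and [ω]_{B_p}, such that for every z ∈ 𝓗, K_μ(z) ≤ C (K^0_{d,μ}(z) + K^{1/3}_{d,μ}(z)). -/

import Mathlib

/-!
Every interval `I` lies in an interval `J` of `D^0` or `D^{1/3}` with `|J| ≤ 6|I|`: at the scale
`2^j ∈ [3|I|, 6|I|]` the endpoints of the two grids are at least `2^j/3 > |I|` apart, so they
cannot both cut `I`. For `Q_I ⊆ Q_J` and `σ = ω^{1-p'}`, Hölder's inequality gives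
`|Q_I|^p ≤ ω(Q_I) σ(Q_I)^{p-1} ≤ ω(Q_I) σ(Q_J)^{p-1}`, while the `B_p` condition on `Q_J` gives
`ω(Q_J) σ(Q_J)^{p-1} ≤ [ω]_{B_p} |Q_J|^p`. Hence `ω(Q_J) ≤ [ω]_{B_p} 6^{2p} ω(Q_I)`, and the ratio
`μ(Q_I)/ω(Q_I)` is controlled by `μ(Q_J)/ω(Q_J)`.
-/

open MeasureTheory Set
open scoped ENNReal NNReal

noncomputable section

/-- The upper half-plane `𝓗`. -/
def UHP : Set ℂ := {z : ℂ | 0 < z.im}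

/-- The Carleson box `Q_I` over the bounded interval `I = [a, b)`. -/
def Box (a b : ℝ) : Set ℂ := {z : ℂ | z.re ∈ Set.Ico a b ∧ z.im ∈ Set.Ioo 0 (b - a)}

/-- The `ω`-mass of a set, `ω(S) = ∫_S ω dV`. -/
def wMass (ω : ℂ → ℝ≥0∞) (S : Set ℂ) : ℝ≥0∞ := ∫⁻ z in S, ω z

/-- The Békollé–Bonami constant `[ω]_{B_p}`. -/
def BBconst (ω : ℂ → ℝ≥0∞) (p : ℝ) : ℝ≥0∞ :=
  ⨆ (a : ℝ) (b : ℝ) (_ : a < b),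
    ((volume (Box a b))⁻¹ * wMass ω (Box a b)) *
      ((volume (Box a b))⁻¹ * ∫⁻ z in Box a b, ω z ^ (1 - p / (p - 1))) ^ (p - 1)

/-- `K_μ(z) = sup { μ(Q_I)/ω(Q_I) : I ⊂ ℝ a bounded interval with z ∈ Q_I }`. -/
def Kmu (ω : ℂ → ℝ≥0∞) (μ : Measure ℂ) (z : ℂ) : ℝ≥0∞ :=
  ⨆ (a : ℝ) (b : ℝ) (_ : a < b) (_ : z ∈ Box a b), μ (Box a b) / wMass ω (Box a b)

/-- The Carleson box over the interval `2^j([0,1) + m + (-1)^j β)` of the grid `D^β`. -/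
def dBoxB (β : ℝ) (j m : ℤ) : Set ℂ :=
  Box ((2 : ℝ) ^ j * ((m : ℝ) + (-1 : ℝ) ^ j * β))
    ((2 : ℝ) ^ j * ((m : ℝ) + 1 + (-1 : ℝ) ^ j * β))

/-- `K^β_{d,μ}(z) = sup { μ(Q_I)/ω(Q_I) : I ∈ D^β with z ∈ Q_I }`. -/
def KmuDB (β : ℝ) (ω : ℂ → ℝ≥0∞) (μ : Measure ℂ) (z : ℂ) : ℝ≥0∞ :=
  ⨆ (j : ℤ) (m : ℤ) (_ : z ∈ dBoxB β j m), μ (dBoxB β j m) / wMass ω (dBoxB β j m)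

theorem box_eq_preimage (a b : ℝ) :
    Box a b = Complex.measurableEquivRealProd ⁻¹' (Ico a b ×ˢ Ioo 0 (b - a)) := by
  ext z
  simp [Box, mem_prod]

theorem volume_box (a b : ℝ) : volume (Box a b) = ENNReal.ofReal (b - a) ^ 2 := by
  rw [box_eq_preimage, Complex.volume_preserving_equiv_real_prod.measure_preimage
    (measurableSet_Ico.prod measurableSet_Ioo).nullMeasurableSet, Measure.volume_eq_prod,
    Measure.prod_prod, Real.volume_Ico, Real.volume_Ioo, sub_zero, sq]

theorem volume_box_ne_zero {a b : ℝ} (h : a < b) : volume (Box a b) ≠ 0 := by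
  simpa [volume_box] using h

theorem volume_box_ne_top (a b : ℝ) : volume (Box a b) ≠ ∞ := by
  simp [volume_box]

theorem box_subset_box {a b a' b' : ℝ} (ha : a' ≤ a) (hb : b ≤ b') : Box a b ⊆ Box a' b' :=
  fun _ ⟨⟨hre₁, hre₂⟩, him₁, him₂⟩ => ⟨⟨ha.trans hre₁, hre₂.trans_le hb⟩, him₁, by linarith⟩

theorem exists_int_mul_add_le_lt {h : ℝ} (hh : 0 < h) (a s : ℝ) :
    ∃ m : ℤ, h * (m + s) ≤ a ∧ a < h * (m + 1 + s) := by
  refine ⟨⌊a / h - s⌋, ?_, ?_⟩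
  · have := Int.floor_le (a / h - s)
    rw [← le_div_iff₀' hh]
    linarith
  · have := Int.lt_floor_add_one (a / h - s)
    rw [← div_lt_iff₀' hh]
    linarith

theorem one_third_le_abs_int_sub_neg_one_zpow_div_three (n j : ℤ) :
    1 / 3 ≤ |(n : ℝ) - (-1 : ℝ) ^ j / 3| := by
  obtain ⟨ε, hε, hεj⟩ : ∃ ε : ℤ, (ε = 1 ∨ ε = -1) ∧ (-1 : ℝ) ^ j = ε := by
    rcases Int.even_or_odd j with h | h
    · exact ⟨1, .inl rfl, by simp [h.neg_one_zpow]⟩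
    · exact ⟨-1, .inr rfl, by simp [h.neg_one_zpow]⟩
  have hne : 3 * n - ε ≠ 0 := by omega
  have : (1 : ℝ) ≤ |((3 * n - ε : ℤ) : ℝ)| := by exact_mod_cast Int.one_le_abs hne
  rw [hεj, show (n : ℝ) - ε / 3 = ((3 * n - ε : ℤ) : ℝ) / 3 by push_cast; ring, abs_div,
    abs_of_pos (by norm_num : (0 : ℝ) < 3)]
  linarith

theorem exists_dyadic_interval_superset {a b : ℝ} (hab : a < b) :
    ∃ (β : ℝ) (j m : ℤ), (β = 0 ∨ β = 1 / 3) ∧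
      (2 : ℝ) ^ j * ((m : ℝ) + (-1 : ℝ) ^ j * β) ≤ a ∧
      b ≤ (2 : ℝ) ^ j * ((m : ℝ) + 1 + (-1 : ℝ) ^ j * β) ∧ (2 : ℝ) ^ j ≤ 6 * (b - a) := by
  obtain ⟨n, hn₁, hn₂⟩ := exists_mem_Ioc_zpow (by linarith : (0 : ℝ) < 3 * (b - a)) one_lt_two
  have hj : (2 : ℝ) ^ (n + 1) = 2 ^ n * 2 := zpow_add_one₀ two_ne_zero n
  set j := n + 1
  have hpos : (0 : ℝ) < 2 ^ j := zpow_pos two_pos j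
  have hlen : (2 : ℝ) ^ j ≤ 6 * (b - a) := by linarith
  obtain ⟨m₀, ha₀, hb₀⟩ := exists_int_mul_add_le_lt hpos a ((-1 : ℝ) ^ j * 0)
  obtain ⟨m₁, ha₁, hb₁⟩ := exists_int_mul_add_le_lt hpos a ((-1 : ℝ) ^ j * (1 / 3))
  by_cases h₀ : b ≤ 2 ^ j * (m₀ + 1 + (-1 : ℝ) ^ j * 0)
  · exact ⟨0, j, m₀, .inl rfl, ha₀, h₀, hlen⟩
  by_cases h₁ : b ≤ 2 ^ j * (m₁ + 1 + (-1 : ℝ) ^ j * (1 / 3))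
  · exact ⟨1 / 3, j, m₁, .inr rfl, ha₁, h₁, hlen⟩
  have hgap := one_third_le_abs_int_sub_neg_one_zpow_div_three (m₀ - m₁) j
  have hdist : (2 : ℝ) ^ j * |((m₀ - m₁ : ℤ) : ℝ) - (-1 : ℝ) ^ j / 3| < b - a := by
    rw [← abs_of_pos hpos, ← abs_mul, abs_lt]
    push_cast
    constructor <;> nlinarith
  nlinarith

theorem measure_univ_rpow_le_lintegral_mul_lintegral_rpow {α : Type*} [MeasurableSpace α]
    {ν : Measure α} {ω : α → ℝ≥0∞} (hω : AEMeasurable ω ν) (h₀ : ∀ᵐ x ∂ν, ω x ≠ 0)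
    (h_top : ∀ᵐ x ∂ν, ω x ≠ ∞) {p : ℝ} (hp : 1 < p) :
    ν univ ^ p ≤ (∫⁻ x, ω x ∂ν) * (∫⁻ x, ω x ^ (1 - p / (p - 1)) ∂ν) ^ (p - 1) := by
  have hp₀ : 0 < p := by linarith
  have hpq := Real.HolderConjugate.conjExponent hp
  have hq : p.conjExponent = p / (p - 1) := rfl
  -- Hölder applied to `1 = ω ^ (1 / p) * ω ^ (-1 / p)`.
  have h_one : ν univ = ∫⁻ x, ((fun x ↦ ω x ^ (1 / p)) * fun x ↦ ω x ^ (-(1 / p))) x ∂ν := by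
    rw [← lintegral_one]
    refine lintegral_congr_ae ?_
    filter_upwards [h₀, h_top] with x hx₀ hx_top
    rw [Pi.mul_apply, ← ENNReal.rpow_add _ _ hx₀ hx_top, add_neg_cancel, ENNReal.rpow_zero]
  have h_holder := ENNReal.lintegral_mul_le_Lp_mul_Lq ν hpq (hω.pow_const (1 / p))
    (hω.pow_const (-(1 / p)))
  simp_rw [← ENNReal.rpow_mul, one_div, inv_mul_cancel₀ hp₀.ne', ENNReal.rpow_one] at h_holder
  calc ν univ ^ p
      ≤ ((∫⁻ x, ω x ∂ν) ^ p⁻¹ *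
          (∫⁻ x, ω x ^ (-p⁻¹ * p.conjExponent) ∂ν) ^ p.conjExponent⁻¹) ^ p := by
        gcongr
        simpa [h_one] using h_holder
    _ = (∫⁻ x, ω x ∂ν) * (∫⁻ x, ω x ^ (1 - p / (p - 1)) ∂ν) ^ (p - 1) := by
        have hp₁ : p - 1 ≠ 0 := by linarith
        rw [ENNReal.mul_rpow_of_nonneg _ _ hp₀.le, ← ENNReal.rpow_mul, ← ENNReal.rpow_mul,
          inv_mul_cancel₀ hp₀.ne', ENNReal.rpow_one, hq]
        congr 3
        · ext x
          congr 1
          field_simp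
          ring
        · field_simp

section BekolleBonami

variable {ω : ℂ → ℝ≥0∞} {p : ℝ} {a b a' b' : ℝ}

theorem wMass_mul_lintegral_rpow_le (hp : 1 ≤ p) (hab : a < b) :
    wMass ω (Box a b) * (∫⁻ z in Box a b, ω z ^ (1 - p / (p - 1))) ^ (p - 1) ≤
      BBconst ω p * volume (Box a b) ^ p := by
  set v := volume (Box a b)
  set σ := ∫⁻ z in Box a b, ω z ^ (1 - p / (p - 1))
  have hv₀ : v ≠ 0 := volume_box_ne_zero hab
  have hv_top : v ≠ ∞ := volume_box_ne_top a b
  have hvp₀ : v ^ (p - 1) ≠ 0 := ENNReal.rpow_pos (pos_iff_ne_zero.2 hv₀) hv_top |>.ne'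
  have hvp_top : v ^ (p - 1) ≠ ∞ := ENNReal.rpow_ne_top_of_nonneg (by linarith) hv_top
  have h_avg : (v⁻¹ * wMass ω (Box a b)) * (v⁻¹ * σ) ^ (p - 1) ≤ BBconst ω p :=
    le_iSup₂_of_le a b (le_iSup_of_le hab le_rfl)
  calc wMass ω (Box a b) * σ ^ (p - 1)
      = (v * v ^ (p - 1)) * ((v⁻¹ * wMass ω (Box a b)) * (v⁻¹ * σ) ^ (p - 1)) := by
        rw [ENNReal.mul_rpow_of_nonneg _ _ (by linarith), ENNReal.inv_rpow,
          show v * v ^ (p - 1) * (v⁻¹ * wMass ω (Box a b) * ((v ^ (p - 1))⁻¹ * σ ^ (p - 1))) =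
            (v * v⁻¹) * (v ^ (p - 1) * (v ^ (p - 1))⁻¹) * (wMass ω (Box a b) * σ ^ (p - 1)) by
            ring, ENNReal.mul_inv_cancel hv₀ hv_top, ENNReal.mul_inv_cancel hvp₀ hvp_top,
          one_mul, one_mul]
    _ ≤ (v * v ^ (p - 1)) * BBconst ω p := by gcongr
    _ = BBconst ω p * v ^ (1 + (p - 1)) := by
        rw [ENNReal.rpow_add_of_nonneg _ _ zero_le_one (by linarith), ENNReal.rpow_one, mul_comm]
    _ = BBconst ω p * v ^ p := by rw [add_sub_cancel]

theorem wMass_mul_volume_rpow_le (hp : 1 < p) (hω : Measurable ω) (hBp : BBconst ω p < ⊤)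
    (hab' : a' < b') (hsub : Box a b ⊆ Box a' b') (h_fin : wMass ω (Box a b) ≠ ∞) :
    wMass ω (Box a' b') * volume (Box a b) ^ p ≤
      BBconst ω p * volume (Box a' b') ^ p * wMass ω (Box a b) := by
  have h_big := wMass_mul_lintegral_rpow_le (ω := ω) hp.le hab'
  set r := 1 - p / (p - 1)
  set σ' := ∫⁻ z in Box a' b', ω z ^ r
  have hr : r < 0 := by
    have : 1 < p / (p - 1) := (one_lt_div (by linarith)).2 (by linarith)
    linarith
  have h_bound_top : BBconst ω p * volume (Box a' b') ^ p ≠ ∞ :=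
    ENNReal.mul_ne_top hBp.ne (ENNReal.rpow_ne_top_of_nonneg (by linarith) (volume_box_ne_top _ _))
  rcases eq_or_ne σ' ∞ with hσ' | hσ'
  · -- `σ(Q') = ∞` forces `ω(Q') = 0` through the `B_p` bound on `Q'`.
    have : wMass ω (Box a' b') = 0 := by
      by_contra hne
      rw [hσ', ENNReal.top_rpow_of_pos (by linarith), ENNReal.mul_top hne] at h_big
      exact h_bound_top (top_le_iff.1 h_big)
    simp [this]
  have hσ : ∫⁻ z in Box a b, ω z ^ r ≠ ∞ := ne_top_of_le_ne_top hσ' (lintegral_mono_set hsub)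
  have h₀ : ∀ᵐ z ∂volume.restrict (Box a b), ω z ≠ 0 := by
    filter_upwards [ae_lt_top (hω.pow_const r) hσ] with z hz hz₀
    simp [hz₀, ENNReal.zero_rpow_of_neg hr] at hz
  have h_small : volume (Box a b) ^ p ≤ wMass ω (Box a b) * σ' ^ (p - 1) := by
    calc volume (Box a b) ^ p
        ≤ wMass ω (Box a b) * (∫⁻ z in Box a b, ω z ^ r) ^ (p - 1) := by
          have := measure_univ_rpow_le_lintegral_mul_lintegral_rpow hω.aemeasurable h₀
            ((ae_lt_top hω h_fin).mono fun _ h ↦ h.ne) hp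
          rwa [Measure.restrict_apply_univ] at this
      _ ≤ wMass ω (Box a b) * σ' ^ (p - 1) := by
          gcongr
          exact lintegral_mono_set hsub
  calc wMass ω (Box a' b') * volume (Box a b) ^ p
      ≤ wMass ω (Box a b) * (wMass ω (Box a' b') * σ' ^ (p - 1)) := by
        rw [mul_left_comm]
        gcongr
    _ ≤ wMass ω (Box a b) * (BBconst ω p * volume (Box a' b') ^ p) := by gcongr
    _ = BBconst ω p * volume (Box a' b') ^ p * wMass ω (Box a b) := mul_comm _ _

end BekolleBonami

section BekolleBonamiDoubling

variable {ω : ℂ → ℝ≥0∞} {p : ℝ} {a b a' b' : ℝ} {k : ℝ≥0}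

theorem volume_box_rpow_le (hp : 0 ≤ p) (hlen : b' - a' ≤ k * (b - a)) :
    volume (Box a' b') ^ p ≤ (k : ℝ≥0∞) ^ (2 * p) * volume (Box a b) ^ p := by
  have h : volume (Box a' b') ≤ (k : ℝ≥0∞) ^ 2 * volume (Box a b) := by
    rw [volume_box, volume_box, ← mul_pow, ← ENNReal.ofReal_coe_nnreal,
      ← ENNReal.ofReal_mul k.coe_nonneg]
    gcongr
  calc volume (Box a' b') ^ p ≤ ((k : ℝ≥0∞) ^ 2 * volume (Box a b)) ^ p := by gcongr
    _ = (k : ℝ≥0∞) ^ (2 * p) * volume (Box a b) ^ p := by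
        rw [ENNReal.mul_rpow_of_nonneg _ _ hp, ENNReal.rpow_mul, ENNReal.rpow_two]

theorem wMass_box_le_of_subset (hp : 1 < p) (hω : Measurable ω) (hBp : BBconst ω p < ⊤)
    (hab : a < b) (ha : a' ≤ a) (hb : b ≤ b') (hlen : b' - a' ≤ k * (b - a))
    (h_fin : wMass ω (Box a b) ≠ ∞) :
    wMass ω (Box a' b') ≤ BBconst ω p * (k : ℝ≥0∞) ^ (2 * p) * wMass ω (Box a b) := by
  have hv₀ : volume (Box a b) ^ p ≠ 0 :=
    (ENNReal.rpow_pos (pos_iff_ne_zero.2 (volume_box_ne_zero hab)) (volume_box_ne_top a b)).ne'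
  have hv_top : volume (Box a b) ^ p ≠ ∞ :=
    ENNReal.rpow_ne_top_of_nonneg (by linarith) (volume_box_ne_top a b)
  refine (ENNReal.mul_le_mul_iff_left hv₀ hv_top).1 ?_
  calc wMass ω (Box a' b') * volume (Box a b) ^ p
      ≤ BBconst ω p * volume (Box a' b') ^ p * wMass ω (Box a b) :=
        wMass_mul_volume_rpow_le hp hω hBp (by linarith) (box_subset_box ha hb) h_fin
    _ ≤ BBconst ω p * ((k : ℝ≥0∞) ^ (2 * p) * volume (Box a b) ^ p) * wMass ω (Box a b) := by
        gcongr
        exact volume_box_rpow_le (by linarith) hlen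
    _ = BBconst ω p * (k : ℝ≥0∞) ^ (2 * p) * wMass ω (Box a b) * volume (Box a b) ^ p := by
        ring

/- The summand `1` keeps the constant positive when `[ω]_{B_p} = 0` (e.g. `ω = 0`), where
`ω(Q_J) = 0` and the right-hand ratio is `∞`. -/
theorem div_wMass_box_le_of_subset (hp : 1 < p) (hω : Measurable ω) (hBp : BBconst ω p < ⊤)
    (μ : Measure ℂ) (hab : a < b) (ha : a' ≤ a) (hb : b ≤ b') (hlen : b' - a' ≤ k * (b - a)) :
    μ (Box a b) / wMass ω (Box a b) ≤
      (1 + BBconst ω p * (k : ℝ≥0∞) ^ (2 * p)) * (μ (Box a' b') / wMass ω (Box a' b')) := by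
  set C := 1 + BBconst ω p * (k : ℝ≥0∞) ^ (2 * p)
  have hC₀ : C ≠ 0 := by simp [C]
  have hC_top : C ≠ ∞ := ENNReal.add_ne_top.2 ⟨ENNReal.one_ne_top,
    ENNReal.mul_ne_top hBp.ne (ENNReal.rpow_ne_top_of_nonneg (by linarith) ENNReal.coe_ne_top)⟩
  rcases eq_or_ne (wMass ω (Box a b)) ∞ with h_top | h_fin
  · simp [h_top]
  have h_mass : wMass ω (Box a' b') ≤ C * wMass ω (Box a b) :=
    (wMass_box_le_of_subset hp hω hBp hab ha hb hlen h_fin).trans (by gcongr; exact le_add_self)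
  calc μ (Box a b) / wMass ω (Box a b) ≤ μ (Box a' b') / wMass ω (Box a b) := by
        gcongr
        exact box_subset_box ha hb
    _ = C * μ (Box a' b') / (C * wMass ω (Box a b)) :=
        (ENNReal.mul_div_mul_left _ _ hC₀ hC_top).symm
    _ ≤ C * μ (Box a' b') / wMass ω (Box a' b') := ENNReal.div_le_div_left h_mass _
    _ = C * (μ (Box a' b') / wMass ω (Box a' b')) := mul_div_assoc _ _ _

end BekolleBonamiDoubling

/-- For `1 < p < ∞`, `ω ∈ B_p` and a positive Borel measure `μ` on `𝓗`, the function
`K_μ` is pointwise dominated, up to a constant depending only on `p` and `[ω]_{B_p}`,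
by the sum of its dyadic counterparts over the grids `D^0` and `D^{1/3}`. -/
theorem Kmu_le_sum_dyadic_Kmu (p : ℝ) (hp : 1 < p)
    (ω : ℂ → ℝ≥0∞) (hω : Measurable ω) (hBp : BBconst ω p < ⊤) (μ : Measure ℂ) :
    ∃ C : ℝ≥0∞, 0 < C ∧ C < ⊤ ∧ ∀ z ∈ UHP,
      Kmu ω μ z ≤ C * (KmuDB 0 ω μ z + KmuDB (1 / 3) ω μ z) := by
  refine ⟨1 + BBconst ω p * ((6 : ℝ≥0) : ℝ≥0∞) ^ (2 * p), lt_of_lt_of_le one_pos le_self_add,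
    ENNReal.add_lt_top.2 ⟨ENNReal.one_lt_top, ENNReal.mul_lt_top hBp
      (ENNReal.rpow_lt_top_of_nonneg (by linarith) ENNReal.coe_ne_top)⟩, fun z _ ↦ ?_⟩
  refine iSup₂_le fun a b ↦ iSup₂_le fun hab hz ↦ ?_
  obtain ⟨β, j, m, hβ, ha, hb, hlen⟩ := exists_dyadic_interval_superset hab
  calc μ (Box a b) / wMass ω (Box a b)
      ≤ _ * (μ (dBoxB β j m) / wMass ω (dBoxB β j m)) :=
        div_wMass_box_le_of_subset (k := 6) hp hω hBp μ hab ha hb (by push_cast; linear_combination hlen)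
    _ ≤ _ * KmuDB β ω μ z := by
        gcongr
        exact le_iSup₂_of_le j m (le_iSup_of_le (box_subset_box ha hb hz) le_rfl)
    _ ≤ _ * (KmuDB 0 ω μ z + KmuDB (1 / 3) ω μ z) := by
        gcongr
        rcases hβ with rfl | rfl
        exacts [le_self_add, le_add_self]
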